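/- arXiv:2311.16454 — 4 statements merged into one kernel-verified Lean document; each statement's English description precedes it below -/
import Mathlib

section
/- Let T ⊆ ℝ² be a compact convex set of diameter at most h > 0, let V ⊆ T be a finite nonempty set (the vertices of the element), and let S ⊆ T be a finite set (the singular points). Let L ≥ 2 and let ω₁, …, ω_L : ℝ² → ℝ be continuous on T and differentiable at every point of T ∖ S with ‖∇ω_q(z)‖_∞ ≤ M for all z ∈ T ∖ S and all q. Let κ ≥ 2√2. Suppose that for every q ∈ {1, …, L−1} there exists a vertex v ∈ V with |ω_q(v) − ω_{q+1}(v)| > κ·h·M. Then for every q ∈ {1, …, L−1} and every k ∈ T one has |ω_q(k) − ω_{q+1}(k)| > (κ − 2√2)·h·M ≥ 0; in particular, no two adjacent functions ω_q and ω_{q+1} intersect anywhere in T. -/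
/-!
Off the finite singular set every band function has gradient of Euclidean norm at most `√2 M`,
and a segment meets that set only finitely often, so the mean value inequality (applied between
the singular points) makes every band function `√2 M`-Lipschitz on the convex element. Moving
from a separating vertex to an arbitrary point of `T` changes each of the two adjacent band
functions by at most `√2 M h`, hence their gap by at most `2√2 M h`.
-/

open Set AffineMap

theorem abs_sub_le_of_hasDerivAt_Ioo {g g' : ℝ → ℝ} {a b C : ℝ} (hab : a ≤ b)
    (hg : ContinuousOn g (Icc a b)) (hd : ∀ t ∈ Ioo a b, HasDerivAt g (g' t) t)
    (hbd : ∀ t ∈ Ioo a b, |g' t| ≤ C) :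
    |g b - g a| ≤ C * (b - a) := by
  rcases hab.eq_or_lt with rfl | hlt
  · simp
  obtain ⟨c, hc, hslope⟩ := exists_hasDerivAt_eq_slope g g' hlt hg hd
  have hpos : 0 < b - a := sub_pos.2 hlt
  calc |g b - g a| = |g' c| * (b - a) := by
        rw [hslope, abs_div, abs_of_pos hpos, div_mul_cancel₀ _ hpos.ne']
    _ ≤ C * (b - a) := by gcongr; exact hbd c hc

/-- The exceptional points are removed one at a time by splitting `[a, b]` at them. -/
theorem abs_sub_le_of_hasDerivAt_off_finite {g g' : ℝ → ℝ} {F : Set ℝ} {C : ℝ}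
    (hF : F.Finite) {a b : ℝ} (hab : a ≤ b) (hg : ContinuousOn g (Icc a b))
    (hd : ∀ t ∈ Ioo a b \ F, HasDerivAt g (g' t) t) (hbd : ∀ t ∈ Ioo a b \ F, |g' t| ≤ C) :
    |g b - g a| ≤ C * (b - a) := by
  induction F, hF using Set.Finite.induction_on generalizing a b with
  | empty =>
    simp only [sdiff_empty] at hd hbd
    exact abs_sub_le_of_hasDerivAt_Ioo hab hg hd hbd
  | @insert c F _ _ ih =>
    by_cases hc : c ∈ Ioo a b
    · have left : |g c - g a| ≤ C * (c - a) :=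
        ih hc.1.le (hg.mono (Icc_subset_Icc_right hc.2.le))
          (fun t ht => hd t ⟨⟨ht.1.1, ht.1.2.trans hc.2⟩, by simp [ht.1.2.ne, ht.2]⟩)
          (fun t ht => hbd t ⟨⟨ht.1.1, ht.1.2.trans hc.2⟩, by simp [ht.1.2.ne, ht.2]⟩)
      have right : |g b - g c| ≤ C * (b - c) :=
        ih hc.2.le (hg.mono (Icc_subset_Icc_left hc.1.le))
          (fun t ht => hd t ⟨⟨hc.1.trans ht.1.1, ht.1.2⟩, by simp [ht.1.1.ne', ht.2]⟩)
          (fun t ht => hbd t ⟨⟨hc.1.trans ht.1.1, ht.1.2⟩, by simp [ht.1.1.ne', ht.2]⟩)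
      calc |g b - g a| ≤ |g b - g c| + |g c - g a| := abs_sub_le _ _ _
        _ ≤ C * (b - a) := by linarith
    · have hsub : Ioo a b \ F ⊆ Ioo a b \ insert c F := fun t ht =>
        ⟨ht.1, by rintro (rfl | h); exacts [hc ht.1, ht.2 h]⟩
      exact ih hab hg (fun t ht => hd t (hsub ht)) (fun t ht => hbd t (hsub ht))

theorem Convex.abs_image_sub_le_of_hasFDerivWithinAt_off_finite {E : Type*}
    [NormedAddCommGroup E] [NormedSpace ℝ E] {s S : Set E} {f : E → ℝ} {f' : E → E →L[ℝ] ℝ}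
    {C : ℝ} (hs : Convex ℝ s) (hS : S.Finite) (hf : ContinuousOn f s)
    (hd : ∀ z ∈ s \ S, HasFDerivWithinAt f (f' z) s z) (hbd : ∀ z ∈ s \ S, ‖f' z‖ ≤ C)
    {x y : E} (hx : x ∈ s) (hy : y ∈ s) :
    |f y - f x| ≤ C * ‖y - x‖ := by
  rcases eq_or_ne x y with rfl | hxy
  · simp
  have hmaps : MapsTo (lineMap x y) (Icc (0 : ℝ) 1) s := fun t ht => hs.lineMap_mem hx hy ht
  have key := abs_sub_le_of_hasDerivAt_off_finite (g := f ∘ lineMap x y)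
    (g' := fun t => f' (lineMap x y t) (y - x)) (C := C * ‖y - x‖)
    (hS.preimage (lineMap_injective ℝ hxy).injOn) zero_le_one
    (hf.comp lineMap_continuous.continuousOn hmaps)
    (fun t ht => ((hd _ ⟨hmaps (Ioo_subset_Icc_self ht.1), ht.2⟩).comp_hasDerivWithinAt t
      hasDerivAt_lineMap.hasDerivWithinAt hmaps).hasDerivAt (Icc_mem_nhds ht.1.1 ht.1.2))
    (fun t ht => (ContinuousLinearMap.le_opNorm (f' (lineMap x y t)) (y - x)).trans <| by
      gcongr
      exact hbd _ ⟨hmaps (Ioo_subset_Icc_self ht.1), ht.2⟩)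
  simpa using key

theorem OrthonormalBasis.norm_le_sqrt_card_mul_of_abs_apply_le {ι E : Type*} [Fintype ι]
    [NormedAddCommGroup E] [InnerProductSpace ℝ E] [CompleteSpace E]
    (b : OrthonormalBasis ι ℝ E) {φ : E →L[ℝ] ℝ} {M : ℝ} (hφ : ∀ i, |φ (b i)| ≤ M) :
    ‖φ‖ ≤ √(Fintype.card ι) * M := by
  set x := (InnerProductSpace.toDual ℝ E).symm φ
  calc ‖φ‖ = ‖x‖ := by simp [x]
    _ ≤ √(Fintype.card ι) * ⨆ i, ‖inner ℝ (b i) x‖ := b.norm_le_card_mul_iSup_norm_inner x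
    _ ≤ √(Fintype.card ι) * M := by
      rcases isEmpty_or_nonempty ι with hι | hι
      · simp
      gcongr
      refine ciSup_le fun i => ?_
      rw [real_inner_comm, InnerProductSpace.toDual_symm_apply, Real.norm_eq_abs]
      exact hφ i

theorem stmt_2_general (T : Set (EuclideanSpace ℝ (Fin 2)))
    (hTconv : Convex ℝ T)
    (h : ℝ) (hh : 0 < h) (hdiam : ∀ x ∈ T, ∀ y ∈ T, dist x y ≤ h)
    (V : Set (EuclideanSpace ℝ (Fin 2))) (hVT : V ⊆ T)
    (S : Set (EuclideanSpace ℝ (Fin 2))) (hSfin : S.Finite)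
    (L : ℕ) (M : ℝ) (hM : 0 ≤ M)
    (ω : ℕ → EuclideanSpace ℝ (Fin 2) → ℝ)
    (ω' : ℕ → EuclideanSpace ℝ (Fin 2) → (EuclideanSpace ℝ (Fin 2) →L[ℝ] ℝ))
    (hcont : ∀ q, 1 ≤ q → q ≤ L → ContinuousOn (ω q) T)
    (hdiff : ∀ q, 1 ≤ q → q ≤ L → ∀ z ∈ T \ S, HasFDerivWithinAt (ω q) (ω' q z) T z)
    (hgrad : ∀ q, 1 ≤ q → q ≤ L → ∀ z ∈ T \ S, ∀ i : Fin 2,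
      |ω' q z (EuclideanSpace.single i 1)| ≤ M)
    (κ : ℝ) (hκ : 2 * Real.sqrt 2 ≤ κ)
    (hsep : ∀ q, 1 ≤ q → q ≤ L - 1 → ∃ v ∈ V, κ * h * M < |ω q v - ω (q + 1) v|) :
    ∀ q, 1 ≤ q → q ≤ L - 1 → ∀ k ∈ T,
      (κ - 2 * Real.sqrt 2) * h * M < |ω q k - ω (q + 1) k| ∧
      0 ≤ (κ - 2 * Real.sqrt 2) * h * M ∧
      ω q k ≠ ω (q + 1) k := by
  intro q hq1 hq2 k hk
  obtain ⟨v, hvV, hv⟩ := hsep q hq1 hq2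
  have hvT : v ∈ T := hVT hvV
  have hnorm : ∀ p, 1 ≤ p → p ≤ L → ∀ z ∈ T \ S, ‖ω' p z‖ ≤ √2 * M := fun p hp1 hp2 z hz => by
    simpa using (EuclideanSpace.basisFun (Fin 2) ℝ).norm_le_sqrt_card_mul_of_abs_apply_le
      fun i => by simpa using hgrad p hp1 hp2 z hz i
  have hvariation : ∀ p, 1 ≤ p → p ≤ L → |ω p v - ω p k| ≤ √2 * M * h := fun p hp1 hp2 =>
    calc |ω p v - ω p k| ≤ √2 * M * ‖v - k‖ :=
          hTconv.abs_image_sub_le_of_hasFDerivWithinAt_off_finite hSfin (hcont p hp1 hp2)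
            (hdiff p hp1 hp2) (hnorm p hp1 hp2) hk hvT
      _ ≤ √2 * M * h := by
          gcongr
          rw [← dist_eq_norm]
          exact hdiam v hvT k hk
  have hgap_nonneg : 0 ≤ (κ - 2 * √2) * h * M :=
    mul_nonneg (mul_nonneg (sub_nonneg.2 hκ) hh.le) hM
  have hgap : (κ - 2 * √2) * h * M < |ω q k - ω (q + 1) k| := by
    have hq := hvariation q hq1 (by omega)
    have hq' := hvariation (q + 1) (by omega) (by omega)
    have htri := abs_sub_le (ω q v) (ω q k) (ω (q + 1) v)
    have htri' := abs_sub_le (ω q k) (ω (q + 1) k) (ω (q + 1) v)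
    rw [abs_sub_comm] at hq'
    linarith
  refine ⟨hgap, hgap_nonneg, fun hcross => ?_⟩
  rw [hcross, sub_self, abs_zero] at hgap
  linarith

/-- Reliability of the marking criterion (Theorem 3.3): if on an element `T` of
diameter at most `h` every pair of adjacent band functions `ω_q, ω_{q+1}` is separated
by more than `κ·h·M` at some vertex, where `κ ≥ 2√2` and `M` bounds the sup-norm of the
gradients away from the finite singular set `S`, then adjacent band functions are
separated by more than `(κ − 2√2)·h·M ≥ 0` everywhere in `T`; in particular they do
not intersect in `T`. -/
theorem stmt_2 (T : Set (EuclideanSpace ℝ (Fin 2)))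
    (hTcomp : IsCompact T) (hTconv : Convex ℝ T)
    (h : ℝ) (hh : 0 < h) (hdiam : ∀ x ∈ T, ∀ y ∈ T, dist x y ≤ h)
    (V : Set (EuclideanSpace ℝ (Fin 2))) (hVT : V ⊆ T) (hVfin : V.Finite)
    (hVne : V.Nonempty)
    (S : Set (EuclideanSpace ℝ (Fin 2))) (hST : S ⊆ T) (hSfin : S.Finite)
    (L : ℕ) (hL : 2 ≤ L) (M : ℝ) (hM : 0 ≤ M)
    (ω : ℕ → EuclideanSpace ℝ (Fin 2) → ℝ)
    (ω' : ℕ → EuclideanSpace ℝ (Fin 2) → (EuclideanSpace ℝ (Fin 2) →L[ℝ] ℝ))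
    (hcont : ∀ q, 1 ≤ q → q ≤ L → ContinuousOn (ω q) T)
    (hdiff : ∀ q, 1 ≤ q → q ≤ L → ∀ z ∈ T \ S, HasFDerivWithinAt (ω q) (ω' q z) T z)
    (hgrad : ∀ q, 1 ≤ q → q ≤ L → ∀ z ∈ T \ S, ∀ i : Fin 2,
      |ω' q z (EuclideanSpace.single i 1)| ≤ M)
    (κ : ℝ) (hκ : 2 * Real.sqrt 2 ≤ κ)
    (hsep : ∀ q, 1 ≤ q → q ≤ L - 1 → ∃ v ∈ V, κ * h * M < |ω q v - ω (q + 1) v|) :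
    ∀ q, 1 ≤ q → q ≤ L - 1 → ∀ k ∈ T,
      (κ - 2 * Real.sqrt 2) * h * M < |ω q k - ω (q + 1) k| ∧
      0 ≤ (κ - 2 * Real.sqrt 2) * h * M ∧
      ω q k ≠ ω (q + 1) k :=
  stmt_2_general T hTconv h hh hdiam V hVT S hSfin L M hM ω ω' hcont hdiff hgrad κ hκ hsep
end

section
/- Let q : ℝ → ℝ be any function and define P(x,y) = (1/4)(1 − x − y/√3)(1 + x − y/√3)·q(x) on the reference triangle T̂. Then for every (x,y) ∈ T̂, |P(x,y)| ≤ sup_{t ∈ [−1,1]} (1/4)(1 − t²)|q(t)|. Moreover, if q is continuous, then sup_{(x,y) ∈ T̂} |P(x,y)| = sup_{t ∈ [−1,1]} (1/4)(1 − t²)|q(t)| = sup over the bottom edge {(t,0) : t ∈ [−1,1]} of |P|. -/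
/-- The reference equilateral triangle with vertices `(-1,0)`, `(1,0)`, `(0,√3)`. -/
def refTri : Set (ℝ × ℝ) :=
  {p | 0 ≤ p.2 ∧ p.2 ≤ Real.sqrt 3 * (1 + p.1) ∧ p.2 ≤ Real.sqrt 3 * (1 - p.1)}

/-- The canonical extension `P(x,y) = (1/4)(1 − x − y/√3)(1 + x − y/√3)·q(x)`. -/
noncomputable def Pext (q : ℝ → ℝ) (p : ℝ × ℝ) : ℝ :=
  (1 / 4) * (1 - p.1 - p.2 / Real.sqrt 3) * (1 + p.1 - p.2 / Real.sqrt 3) * q p.1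

/-
Write `s = y/√3`. On the triangle `0 ≤ s ≤ 1 - |x|`, and the two side factors multiply to
`(1 - s)² - x²`, which lies between `0` and `1 - x²`. Hence `|P(x,y)| ≤ |P(x,0)|`: every value
of `|P|` on the triangle is dominated by a value on the bottom edge, where `|P|` is exactly
`(1/4)(1 - t²)|q(t)|`. Mutual domination of two sets of reals forces equal suprema, also
under Mathlib's junk-value convention for unbounded sets.
-/

lemma mem_Icc_of_mem_refTri {p : ℝ × ℝ} (hp : p ∈ refTri) :
    p.1 ∈ Set.Icc (-1 : ℝ) 1 := by
  obtain ⟨h0, h1, h2⟩ := hp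
  have := Real.sqrt_pos.2 (by norm_num : (0 : ℝ) < 3)
  constructor <;> nlinarith

lemma mk_zero_mem_refTri {t : ℝ} (ht : t ∈ Set.Icc (-1 : ℝ) 1) :
    ((t, 0) : ℝ × ℝ) ∈ refTri := by
  refine ⟨le_rfl, ?_, ?_⟩ <;> exact mul_nonneg (Real.sqrt_nonneg 3) (by linarith [ht.1, ht.2])

lemma abs_Pext_le (q : ℝ → ℝ) {p : ℝ × ℝ} (hp : p ∈ refTri) :
    |Pext q p| ≤ (1 / 4) * (1 - p.1 ^ 2) * |q p.1| := by
  obtain ⟨h0, h1, h2⟩ := hp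
  have h3 := Real.sqrt_pos.2 (by norm_num : (0 : ℝ) < 3)
  set s := p.2 / Real.sqrt 3 with hs
  have hs0 : 0 ≤ s := div_nonneg h0 h3.le
  have hs1 : s ≤ 1 + p.1 := by rw [hs, div_le_iff₀ h3]; linarith
  have hs2 : s ≤ 1 - p.1 := by rw [hs, div_le_iff₀ h3]; linarith
  have hfactor : Pext q p = (1 / 4) * ((1 - s) ^ 2 - p.1 ^ 2) * q p.1 := by
    unfold Pext; ring
  have hnonneg : 0 ≤ (1 / 4) * ((1 - s) ^ 2 - p.1 ^ 2) := by nlinarith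
  rw [hfactor, abs_mul, abs_of_nonneg hnonneg]
  gcongr
  nlinarith

lemma abs_Pext_mk_zero (q : ℝ → ℝ) {t : ℝ} (ht : t ∈ Set.Icc (-1 : ℝ) 1) :
    |Pext q (t, 0)| = (1 / 4) * (1 - t ^ 2) * |q t| := by
  have hedge : Pext q (t, 0) = (1 / 4) * (1 - t ^ 2) * q t := by
    unfold Pext; simp only [zero_div]; ring
  have hnonneg : 0 ≤ (1 / 4) * (1 - t ^ 2) := by nlinarith [ht.1, ht.2]
  rw [hedge, abs_mul, abs_of_nonneg hnonneg]

/-- The sup-norm of the extension `P` over the reference triangle is bounded by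
(and, for continuous `q`, equals) the sup of `(1/4)(1 − t²)|q(t)|` over `[-1,1]`,
which is the sup of `|P|` over the bottom edge. -/
theorem stmt_4 (q : ℝ → ℝ) :
    (∀ B : ℝ, (∀ t ∈ Set.Icc (-1 : ℝ) 1, (1 / 4) * (1 - t ^ 2) * |q t| ≤ B) →
      ∀ p ∈ refTri, |Pext q p| ≤ B) ∧
    (Continuous q →
      sSup ((fun p => |Pext q p|) '' refTri)
          = sSup ((fun t => (1 / 4) * (1 - t ^ 2) * |q t|) '' Set.Icc (-1 : ℝ) 1) ∧
      sSup ((fun p => |Pext q p|) '' refTri)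
          = sSup ((fun t => |Pext q (t, 0)|) '' Set.Icc (-1 : ℝ) 1)) := by
  have hsup : sSup ((fun p => |Pext q p|) '' refTri)
      = sSup ((fun t => (1 / 4) * (1 - t ^ 2) * |q t|) '' Set.Icc (-1 : ℝ) 1) := by
    apply csSup_eq_csSup_of_forall_exists_le
    · rintro _ ⟨p, hp, rfl⟩
      exact ⟨_, ⟨p.1, mem_Icc_of_mem_refTri hp, rfl⟩, abs_Pext_le q hp⟩
    · rintro _ ⟨t, ht, rfl⟩
      exact ⟨_, ⟨(t, 0), mk_zero_mem_refTri ht, rfl⟩, (abs_Pext_mk_zero q ht).ge⟩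
  refine ⟨fun B hB p hp => (abs_Pext_le q hp).trans (hB _ (mem_Icc_of_mem_refTri hp)),
    fun _ => ⟨hsup, ?_⟩⟩
  rw [hsup, Set.image_congr fun t ht => abs_Pext_mk_zero q ht]
end

section
/- Let m ≥ 2 and let q be a real polynomial in one variable with deg q ≤ m − 2. Define the bivariate polynomial P(x,y) = (1/4)(1 − x − y/√3)(1 + x − y/√3)·q(x), which has total degree at most m. Then, with B := sup_{t ∈ [−1,1]} (1/4)(1 − t²)|q(t)|, one has sup_{(x,y) ∈ T̂} |P(x,y)| + m^{−2} · sup_{(x,y) ∈ T̂} ‖∇P(x,y)‖ ≤ (1 + 4/√3) · B, where ‖∇P(x,y)‖ is the Euclidean norm of the gradient of P. -/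
/-!
On the horizontal line at height `y` the extension is the univariate polynomial
`(1/4)(σ² - x²) q(x)`, where `σ = 1 - y/√3` is the half-width of `T̂` there; on `[-σ, σ]` it is
bounded by `σ² B`. Hence `|P| ≤ B`, and Markov's endpoint inequality (the first-derivative case of
the extremality of Chebyshev polynomials) on `[-σ, x]` or `[x, σ]` gives `|∂ₓP| ≤ 2 m² B`.
Since `∂ᵧP = -σ q(x) / (2√3)`, it remains to bound `q` on `[-1, 1]`: for `t ≥ 1/2` the mean value
theorem on `[t, 1]` writes `(1 + t) q(t)` as `-4 f'(c)` for the bottom trace `f`, which Markov on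
`[-1, c]` controls; `t ≤ -1/2` is the mirror image; for `|t| ≤ 1/2` the factor `1 - t²` is at
least `3/4`. So `|q| ≤ 4 m² B` and `|∇P|² ≤ (4 + 4/3) (m² B)² = (4 m² B / √3)²`.
-/

open Polynomial Set

namespace Polynomial

theorem derivative_eval_one_le {n : ℕ} {h : ℝ[X]} {M : ℝ} (hdeg : h.natDegree ≤ n)
    (hb : ∀ x ∈ Icc (-1 : ℝ) 1, |h.eval x| ≤ M) :
    h.derivative.eval 1 ≤ n ^ 2 * M := by
  rcases ((abs_nonneg _).trans (hb 1 (by norm_num))).eq_or_lt with rfl | hM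
  · have : h = 0 := h.eq_zero_of_infinite_isRoot <|
      (Icc_infinite (by norm_num : (-1 : ℝ) < 1)).mono fun x hx => abs_nonpos_iff.mp (hb x hx)
    simp [this]
  · have key := Chebyshev.eval_iterate_derivative_le_of_forall_abs_le_one (k := 1) le_rfl
      (P := C M⁻¹ * h) (n := n)
      (degree_le_of_natDegree_le ((natDegree_C_mul_le _ _).trans hdeg)) fun x hx => by
        rw [eval_mul, eval_C, abs_mul, abs_of_pos (inv_pos.2 hM), inv_mul_le_one₀ hM]
        exact hb x hx
    simp only [Function.iterate_one, derivative_C_mul, eval_mul, eval_C,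
      Chebyshev.derivative_T_eval_one, Int.cast_natCast] at key
    rwa [inv_mul_le_iff₀ hM, mul_comm] at key

theorem abs_derivative_eval_one_le {n : ℕ} {h : ℝ[X]} {M : ℝ} (hdeg : h.natDegree ≤ n)
    (hb : ∀ x ∈ Icc (-1 : ℝ) 1, |h.eval x| ≤ M) :
    |h.derivative.eval 1| ≤ n ^ 2 * M := by
  refine abs_le.2 ⟨?_, derivative_eval_one_le hdeg hb⟩
  have := derivative_eval_one_le (n := n) (h := -h) (by rwa [natDegree_neg]) (by simpa using hb)
  simp only [derivative_neg, eval_neg] at this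
  linarith

theorem abs_mul_abs_derivative_eval_add_le {n : ℕ} {h : ℝ[X]} {M : ℝ} (hdeg : h.natDegree ≤ n)
    (r c : ℝ) (hb : ∀ s ∈ Icc (-1 : ℝ) 1, |h.eval (r * s + c)| ≤ M) :
    |r| * |h.derivative.eval (r + c)| ≤ n ^ 2 * M := by
  have hdeg' : (h.comp (C r * X + C c)).natDegree ≤ n := by
    refine natDegree_comp_le.trans ?_
    have : (C r * X + C c).natDegree ≤ 1 := natDegree_linear_le
    simpa using Nat.mul_le_mul hdeg this
  have := abs_derivative_eval_one_le hdeg' fun s hs => by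
    simpa only [eval_comp, eval_add, eval_mul, eval_C, eval_X] using hb s hs
  simpa [derivative_comp, abs_mul] using this

theorem markov_right_endpoint {n : ℕ} {h : ℝ[X]} {a t M : ℝ} (hdeg : h.natDegree ≤ n) (hat : a ≤ t)
    (hb : ∀ s ∈ Icc a t, |h.eval s| ≤ M) :
    (t - a) * |h.derivative.eval t| ≤ 2 * n ^ 2 * M := by
  have := abs_mul_abs_derivative_eval_add_le hdeg ((t - a) / 2) ((a + t) / 2) fun s hs =>
    hb _ ⟨by nlinarith [hs.1], by nlinarith [hs.2]⟩
  rw [abs_of_nonneg (by linarith), show (t - a) / 2 + (a + t) / 2 = t by ring] at this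
  linarith

theorem markov_left_endpoint {n : ℕ} {h : ℝ[X]} {t b M : ℝ} (hdeg : h.natDegree ≤ n) (htb : t ≤ b)
    (hb : ∀ s ∈ Icc t b, |h.eval s| ≤ M) :
    (b - t) * |h.derivative.eval t| ≤ 2 * n ^ 2 * M := by
  have := abs_mul_abs_derivative_eval_add_le hdeg (-((b - t) / 2)) ((t + b) / 2) fun s hs =>
    hb _ ⟨by nlinarith [hs.2], by nlinarith [hs.1]⟩
  rw [abs_neg, abs_of_nonneg (by linarith), show -((b - t) / 2) + (t + b) / 2 = t by ring] at this
  linarith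

end Polynomial

section PartialDerivatives

variable {𝕜 F : Type*} [NontriviallyNormedField 𝕜] [NormedAddCommGroup F] [NormedSpace 𝕜 F]
  {f : 𝕜 × 𝕜 → F} {p : 𝕜 × 𝕜}

theorem fderiv_apply_one_zero (hf : DifferentiableAt 𝕜 f p) :
    fderiv 𝕜 f p (1, 0) = deriv (fun t => f (t, p.2)) p.1 :=
  ((hf.hasFDerivAt.comp_hasDerivAt p.1
    ((hasDerivAt_id p.1).prodMk (hasDerivAt_const p.1 p.2))).deriv).symm

theorem fderiv_apply_zero_one (hf : DifferentiableAt 𝕜 f p) :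
    fderiv 𝕜 f p (0, 1) = deriv (fun t => f (p.1, t)) p.2 :=
  ((hf.hasFDerivAt.comp_hasDerivAt p.2
    ((hasDerivAt_const p.2 p.1).prodMk (hasDerivAt_id p.2))).deriv).symm

end PartialDerivatives

namespace TriangleExtension

noncomputable def slicePoly (σ : ℝ) (q : ℝ[X]) : ℝ[X] := C (1 / 4) * (C (σ ^ 2) - X ^ 2) * q

variable {σ : ℝ} {q : ℝ[X]} {m : ℕ} {B : ℝ}

@[simp]
theorem eval_slicePoly (t : ℝ) : (slicePoly σ q).eval t = (σ ^ 2 - t ^ 2) * q.eval t / 4 := by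
  simp only [slicePoly, eval_mul, eval_C, eval_sub, eval_pow, eval_X]
  ring

theorem derivative_eval_slicePoly (t : ℝ) :
    (slicePoly σ q).derivative.eval t
      = ((σ ^ 2 - t ^ 2) * q.derivative.eval t - 2 * t * q.eval t) / 4 := by
  simp only [slicePoly, derivative_mul, derivative_C, derivative_sub, derivative_X_pow, eval_add,
    eval_mul, eval_C, eval_sub, eval_pow, eval_X, eval_zero]
  ring

theorem natDegree_slicePoly_le (hq : q.natDegree + 2 ≤ m) : (slicePoly σ q).natDegree ≤ m := by
  have : (C (σ ^ 2) - X ^ 2 : ℝ[X]).natDegree ≤ 2 :=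
    (natDegree_sub_le _ _).trans (by simp)
  unfold slicePoly
  grw [natDegree_mul_le, natDegree_mul_le, natDegree_C, this]
  omega

theorem abs_eval_slicePoly_le (hB : ∀ t ∈ Icc (-1 : ℝ) 1, |(slicePoly 1 q).eval t| ≤ B)
    (hσ : σ ≤ 1) {t : ℝ} (ht : |t| ≤ σ) : |(slicePoly σ q).eval t| ≤ σ ^ 2 * B := by
  have hσ0 : 0 ≤ σ := (abs_nonneg t).trans ht
  have ht2 : t ^ 2 ≤ σ ^ 2 := sq_le_sq' (abs_le.1 ht).1 (abs_le.1 ht).2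
  have hσ2 : σ ^ 2 ≤ 1 := pow_le_one₀ hσ0 hσ
  have hle : σ ^ 2 - t ^ 2 ≤ σ ^ 2 * (1 - t ^ 2) := by
    nlinarith [mul_nonneg (sq_nonneg t) (sub_nonneg.2 hσ2)]
  have h1 := hB t (abs_le.1 (ht.trans hσ))
  simp only [eval_slicePoly, one_pow, abs_div, abs_mul, abs_of_nonneg (sub_nonneg.2 ht2),
    abs_of_nonneg (sub_nonneg.2 (ht2.trans hσ2))] at h1 ⊢
  calc (σ ^ 2 - t ^ 2) * |q.eval t| / |4| ≤ σ ^ 2 * ((1 - t ^ 2) * |q.eval t| / |4|) := by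
        rw [mul_div_assoc', ← mul_assoc]; gcongr
    _ ≤ σ ^ 2 * B := by gcongr

theorem abs_derivative_eval_slicePoly_le (hq : q.natDegree + 2 ≤ m)
    (hB : ∀ t ∈ Icc (-1 : ℝ) 1, |(slicePoly 1 q).eval t| ≤ B)
    (hσ : σ ≤ 1) {t : ℝ} (ht : |t| ≤ σ) :
    |(slicePoly σ q).derivative.eval t| ≤ 2 * m ^ 2 * B := by
  have hB0 : 0 ≤ B := (abs_nonneg _).trans (hB 0 (by norm_num))
  have hσ0 : 0 ≤ σ := (abs_nonneg t).trans ht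
  rcases hσ0.eq_or_lt with rfl | hσ0
  · rw [abs_nonpos_iff.1 ht, derivative_eval_slicePoly]
    simpa using by positivity
  have hbound : ∀ s ∈ Icc (-σ) σ, |(slicePoly σ q).eval s| ≤ σ ^ 2 * B := fun s hs =>
    abs_eval_slicePoly_le hB hσ (abs_le.2 hs)
  have hdeg := natDegree_slicePoly_le (σ := σ) hq
  obtain ⟨htl, htr⟩ := abs_le.1 ht
  have key : σ * |(slicePoly σ q).derivative.eval t| ≤ 2 * m ^ 2 * (σ ^ 2 * B) := by
    rcases le_total 0 t with h0 | h0
    · refine le_trans ?_ <|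
        markov_right_endpoint hdeg htl fun s hs => hbound s ⟨hs.1, hs.2.trans htr⟩
      gcongr; linarith
    · refine le_trans ?_ <|
        markov_left_endpoint hdeg htr fun s hs => hbound s ⟨htl.trans hs.1, hs.2⟩
      gcongr; linarith
  calc |(slicePoly σ q).derivative.eval t| ≤ 2 * m ^ 2 * (σ * B) :=
        le_of_mul_le_mul_left (by linarith) hσ0
    _ ≤ 2 * m ^ 2 * B := by gcongr; exact mul_le_of_le_one_left hB0 hσ

theorem exists_mul_eval_eq_derivative_slicePoly {t : ℝ} (ht : t ≤ 1) :
    ∃ c ∈ Icc t 1, (1 + t) * q.eval t = -4 * (slicePoly 1 q).derivative.eval c := by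
  rcases ht.eq_or_lt with rfl | ht
  · exact ⟨1, left_mem_Icc.2 le_rfl, by rw [derivative_eval_slicePoly]; ring⟩
  obtain ⟨c, hc, hslope⟩ := exists_deriv_eq_slope (fun x => (slicePoly 1 q).eval x) ht
    (slicePoly 1 q).continuousOn (slicePoly 1 q).differentiableOn
  refine ⟨c, Ioo_subset_Icc_self hc, ?_⟩
  rw [Polynomial.deriv, eq_div_iff (sub_ne_zero.2 ht.ne')] at hslope
  simp only [eval_slicePoly, one_pow, sub_self, zero_mul, zero_div, zero_sub] at hslope
  apply mul_right_cancel₀ (sub_ne_zero.2 ht.ne')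
  linear_combination 4 * hslope

theorem abs_eval_le_of_half_le (hq : q.natDegree + 2 ≤ m)
    (hB : ∀ t ∈ Icc (-1 : ℝ) 1, |(slicePoly 1 q).eval t| ≤ B) {t : ℝ} (ht : t ∈ Icc (1 / 2) 1) :
    |q.eval t| ≤ 4 * m ^ 2 * B := by
  have hB0 : 0 ≤ B := (abs_nonneg _).trans (hB 0 (by norm_num))
  obtain ⟨c, hc, hqc⟩ := exists_mul_eval_eq_derivative_slicePoly (q := q) ht.2
  have hmarkov : (c - -1) * |(slicePoly 1 q).derivative.eval c| ≤ 2 * m ^ 2 * B :=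
    markov_right_endpoint (natDegree_slicePoly_le hq) (by linarith [ht.1, hc.1])
      fun s hs => hB s ⟨hs.1, hs.2.trans hc.2⟩
  have habs : (1 + t) * |q.eval t| = 4 * |(slicePoly 1 q).derivative.eval c| := by
    rw [← abs_of_nonneg (by linarith [ht.1] : (0 : ℝ) ≤ 1 + t), ← abs_mul, hqc, abs_mul]
    norm_num
  have hsq : (1 + t) ^ 2 * |q.eval t| ≤ 8 * m ^ 2 * B :=
    calc (1 + t) ^ 2 * |q.eval t| = 4 * ((1 + t) * |(slicePoly 1 q).derivative.eval c|) := by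
          rw [sq, mul_assoc, habs]; ring
      _ ≤ 4 * ((c - -1) * |(slicePoly 1 q).derivative.eval c|) := by gcongr; linarith [hc.1]
      _ ≤ 8 * m ^ 2 * B := by linarith
  have h94 : 9 / 4 * |q.eval t| ≤ (1 + t) ^ 2 * |q.eval t| := by
    gcongr; nlinarith [ht.1]
  linarith [mul_nonneg (sq_nonneg (m : ℝ)) hB0]

theorem abs_eval_le (hq : q.natDegree + 2 ≤ m)
    (hB : ∀ t ∈ Icc (-1 : ℝ) 1, |(slicePoly 1 q).eval t| ≤ B) {t : ℝ} (ht : t ∈ Icc (-1) 1) :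
    |q.eval t| ≤ 4 * m ^ 2 * B := by
  rcases le_or_gt (1 / 2) t with h | h
  · exact abs_eval_le_of_half_le hq hB ⟨h, ht.2⟩
  rcases le_or_gt t (-1 / 2) with h' | h'
  · have hq' : (q.comp (-X)).natDegree + 2 ≤ m := by simpa [natDegree_comp] using hq
    have hB' : ∀ t ∈ Icc (-1 : ℝ) 1, |(slicePoly 1 (q.comp (-X))).eval t| ≤ B := fun s hs => by
      simpa using hB (-s) ⟨by linarith [hs.2], by linarith [hs.1]⟩
    simpa using abs_eval_le_of_half_le hq' hB' (t := -t) ⟨by linarith, by linarith [ht.1]⟩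
  · have hm : (2 : ℝ) ≤ m := by exact_mod_cast (Nat.le_add_left 2 _).trans hq
    have hval := hB t ht
    rw [eval_slicePoly, abs_div, abs_mul, abs_of_nonneg (by nlinarith), one_pow,
      abs_of_pos (four_pos : (0 : ℝ) < 4)] at hval
    have h34 : 3 / 4 * |q.eval t| ≤ (1 - t ^ 2) * |q.eval t| := by
      gcongr; nlinarith
    have hB0 : 0 ≤ B := (abs_nonneg _).trans (hB 0 (by norm_num))
    have hm4 : 4 * B ≤ m ^ 2 * B := by gcongr; nlinarith
    linarith

noncomputable def extension (q : ℝ[X]) (p : ℝ × ℝ) : ℝ :=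
  (slicePoly (1 - p.2 / Real.sqrt 3) q).eval p.1

theorem extension_apply (p : ℝ × ℝ) :
    extension q p = ((1 - p.2 / Real.sqrt 3) ^ 2 - p.1 ^ 2) * q.eval p.1 / 4 :=
  eval_slicePoly _

theorem differentiable_extension : Differentiable ℝ (extension q) := by
  have : extension q = fun p => ((1 - p.2 / Real.sqrt 3) ^ 2 - p.1 ^ 2) * q.eval p.1 / 4 :=
    funext extension_apply
  rw [this]
  fun_prop

theorem fderiv_extension_one_zero (p : ℝ × ℝ) :
    fderiv ℝ (extension q) p (1, 0)
      = (slicePoly (1 - p.2 / Real.sqrt 3) q).derivative.eval p.1 := by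
  rw [fderiv_apply_one_zero differentiable_extension.differentiableAt]
  simp only [extension]
  exact Polynomial.deriv _

theorem fderiv_extension_zero_one (p : ℝ × ℝ) :
    fderiv ℝ (extension q) p (0, 1)
      = -((1 - p.2 / Real.sqrt 3) * q.eval p.1) / (2 * Real.sqrt 3) := by
  rw [fderiv_apply_zero_one differentiable_extension.differentiableAt]
  simp only [extension_apply]
  apply HasDerivAt.deriv
  refine ((((((hasDerivAt_id p.2).div_const (Real.sqrt 3)).const_sub 1).pow 2).sub_const
    (p.1 ^ 2)).mul_const (q.eval p.1) |>.div_const 4).congr_deriv ?_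
  simp only [id, Nat.cast_ofNat]
  ring

theorem abs_fst_le_of_mem_refTri {p : ℝ × ℝ} (hp : p ∈ refTri) :
    |p.1| ≤ 1 - p.2 / Real.sqrt 3 ∧ 1 - p.2 / Real.sqrt 3 ≤ 1 := by
  obtain ⟨h0, h1, h2⟩ := hp
  have h3 : 0 < Real.sqrt 3 := by positivity
  have h1' : p.2 / Real.sqrt 3 ≤ 1 + p.1 := (div_le_iff₀' h3).2 h1
  have h2' : p.2 / Real.sqrt 3 ≤ 1 - p.1 := (div_le_iff₀' h3).2 h2
  exact ⟨abs_le.2 ⟨by linarith, by linarith⟩, by linarith [div_nonneg h0 h3.le]⟩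

theorem abs_extension_le (hB : ∀ t ∈ Icc (-1 : ℝ) 1, |(slicePoly 1 q).eval t| ≤ B)
    {p : ℝ × ℝ} (hp : p ∈ refTri) : |extension q p| ≤ B := by
  obtain ⟨hx, hσ⟩ := abs_fst_le_of_mem_refTri hp
  have hB0 : 0 ≤ B := (abs_nonneg _).trans (hB 0 (by norm_num))
  calc |extension q p| ≤ (1 - p.2 / Real.sqrt 3) ^ 2 * B := abs_eval_slicePoly_le hB hσ hx
    _ ≤ B := mul_le_of_le_one_left hB0 (pow_le_one₀ ((abs_nonneg _).trans hx) hσ)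

theorem sqrt_fderiv_sq_add_sq_le (hq : q.natDegree + 2 ≤ m)
    (hB : ∀ t ∈ Icc (-1 : ℝ) 1, |(slicePoly 1 q).eval t| ≤ B) {p : ℝ × ℝ} (hp : p ∈ refTri) :
    Real.sqrt ((fderiv ℝ (extension q) p (1, 0)) ^ 2 + (fderiv ℝ (extension q) p (0, 1)) ^ 2)
      ≤ 4 / Real.sqrt 3 * (m ^ 2 * B) := by
  obtain ⟨hx, hσ⟩ := abs_fst_le_of_mem_refTri hp
  have hσ0 : 0 ≤ 1 - p.2 / Real.sqrt 3 := (abs_nonneg _).trans hx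
  have hB0 : 0 ≤ B := (abs_nonneg _).trans (hB 0 (by norm_num))
  have h3 : Real.sqrt 3 ^ 2 = 3 := Real.sq_sqrt (by norm_num)
  have hdx : |fderiv ℝ (extension q) p (1, 0)| ≤ 2 * (m ^ 2 * B) := by
    rw [fderiv_extension_one_zero, ← mul_assoc]
    exact abs_derivative_eval_slicePoly_le hq hB hσ hx
  have hdy : 12 * (fderiv ℝ (extension q) p (0, 1)) ^ 2 ≤ (4 * (m ^ 2 * B)) ^ 2 := by
    have hq' : (1 - p.2 / Real.sqrt 3) * |q.eval p.1| ≤ 4 * (m ^ 2 * B) := by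
      rw [← mul_assoc]
      exact (mul_le_of_le_one_left (abs_nonneg _) hσ).trans
        (abs_eval_le hq hB (abs_le.1 (hx.trans hσ)))
    have : 12 * (fderiv ℝ (extension q) p (0, 1)) ^ 2
        = ((1 - p.2 / Real.sqrt 3) * |q.eval p.1|) ^ 2 := by
      rw [fderiv_extension_zero_one, div_pow, mul_pow, mul_pow, h3, neg_sq, mul_pow, sq_abs]
      field_simp
      ring
    rw [this]
    gcongr
  rw [Real.sqrt_le_iff, mul_pow, div_pow, h3]
  refine ⟨by positivity, ?_⟩
  nlinarith [sq_abs (fderiv ℝ (extension q) p (1, 0)),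
    abs_nonneg (fderiv ℝ (extension q) p (1, 0))]

theorem abs_eval_slicePoly_one_le_sSup (q : ℝ[X]) {t : ℝ} (ht : t ∈ Icc (-1 : ℝ) 1) :
    |(slicePoly 1 q).eval t|
      ≤ sSup ((fun t => (1 / 4) * (1 - t ^ 2) * |q.eval t|) '' Icc (-1 : ℝ) 1) := by
  have hbdd : BddAbove ((fun t => (1 / 4) * (1 - t ^ 2) * |q.eval t|) '' Icc (-1 : ℝ) 1) :=
    isCompact_Icc.bddAbove_image (by fun_prop)
  refine le_of_eq_of_le ?_ (le_csSup hbdd (mem_image_of_mem _ ht))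
  have : 0 ≤ 1 - t ^ 2 := by nlinarith [ht.1, ht.2]
  rw [eval_slicePoly, one_pow, abs_div, abs_mul, abs_of_nonneg this]
  norm_num
  ring

end TriangleExtension

open TriangleExtension

/-- Stability of the polynomial extension operator (Theorem 5.3, boundary datum
vanishing on the two slanted edges): for `m ≥ 2` and a univariate polynomial `q`
of degree at most `m − 2`, the extension
`P(x,y) = (1/4)(1 − x − y/√3)(1 + x − y/√3)·q(x)` satisfies
`‖P‖_{∞,T̂} + m⁻² ‖∇P‖_{∞,T̂} ≤ (1 + 4/√3) · sup_{t∈[−1,1]} (1/4)(1−t²)|q(t)|`,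
where `‖∇P‖` denotes the Euclidean norm of the gradient of `P`. -/
theorem stmt_5 (m : ℕ) (hm : 2 ≤ m)
    (q : Polynomial ℝ) (hq : q.natDegree ≤ m - 2)
    (P : ℝ × ℝ → ℝ)
    (hP : ∀ p : ℝ × ℝ, P p =
      (1 / 4) * (1 - p.1 - p.2 / Real.sqrt 3) * (1 + p.1 - p.2 / Real.sqrt 3)
        * q.eval p.1)
    (B : ℝ)
    (hB : B = sSup ((fun t => (1 / 4) * (1 - t ^ 2) * |q.eval t|) '' Set.Icc (-1 : ℝ) 1)) :
    sSup ((fun p => |P p|) '' refTri)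
      + ((m : ℝ) ^ 2)⁻¹ * sSup ((fun p =>
          Real.sqrt ((fderiv ℝ P p (1, 0)) ^ 2 + (fderiv ℝ P p (0, 1)) ^ 2)) '' refTri)
      ≤ (1 + 4 / Real.sqrt 3) * B := by
  have hq' : q.natDegree + 2 ≤ m := by omega
  have hBq : ∀ t ∈ Icc (-1 : ℝ) 1, |(slicePoly 1 q).eval t| ≤ B := fun t ht =>
    hB ▸ abs_eval_slicePoly_one_le_sSup q ht
  have hB0 : 0 ≤ B := (abs_nonneg _).trans (hBq 0 (by norm_num))
  obtain rfl : P = extension q := funext fun p => by rw [hP, extension_apply]; ring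
  have hval : sSup ((fun p => |extension q p|) '' refTri) ≤ B :=
    Real.sSup_le (forall_mem_image.2 fun p hp => abs_extension_le hBq hp) hB0
  have hgrad : sSup ((fun p => Real.sqrt ((fderiv ℝ (extension q) p (1, 0)) ^ 2
      + (fderiv ℝ (extension q) p (0, 1)) ^ 2)) '' refTri) ≤ 4 / Real.sqrt 3 * (m ^ 2 * B) :=
    Real.sSup_le (forall_mem_image.2 fun p hp => sqrt_fderiv_sq_add_sq_le hq' hBq hp)
      (by positivity)
  have hm0 : (0 : ℝ) < m ^ 2 := by positivity
  calc _ ≤ B + ((m : ℝ) ^ 2)⁻¹ * (4 / Real.sqrt 3 * (m ^ 2 * B)) := by gcongr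
    _ = (1 + 4 / Real.sqrt 3) * B := by field_simp
end

section
/- Let m, m₁, m₂, m₃ be integers with 1 ≤ m_i ≤ m for i = 1, 2, 3. Parametrize the three edges of the reference triangle T̂ affinely by γ₁(t) = (1−t)·ẑ₂ + t·ẑ₃, γ₂(t) = (1−t)·ẑ₃ + t·ẑ₁, γ₃(t) = (1−t)·ẑ₁ + t·ẑ₂ for t ∈ ℝ. Let P̂ be the real vector space of bivariate real polynomials p of total degree at most m such that, for each i = 1, 2, 3, the univariate polynomial t ↦ p(γ_i(t)) has degree at most m_i. Then dim P̂ = (m+1)(m+2)/2 − ((m − m₁) + (m − m₂) + (m − m₃)), which equals 3 + (m₁ − 1) + (m₂ − 1) + (m₃ − 1) + (m−1)(m−2)/2. -/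
/-!
Inside the space of bivariate polynomials of total degree at most `m`, which has dimension
`(m+1)(m+2)/2`, the space `P̂` is the kernel of the linear map recording, for every edge `i`,
the coefficients of degrees `m_i + 1, …, m` of the restriction to that edge. This map is onto
`ℝ^(Σ (m - m_i))`: with the barycentric coordinates `λ_k`, the polynomial
`-λ_{i+1} λ_{i+2}^{m_i} (1 + λ_{i+2} + ⋯ + λ_{i+2}^k)` vanishes on the two other edges (as
`m_i ≥ 1`) and restricts to `t^{m_i+1+k} - t^{m_i}` on edge `i`, so it hits exactly one
standard basis vector. Rank–nullity then gives the dimension.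
-/

open Polynomial Finset

theorem MvPolynomial.natDegree_aeval_le_totalDegree {R σ : Type*} [CommSemiring R]
    {f : σ → R[X]} (hf : ∀ j, (f j).natDegree ≤ 1) (p : MvPolynomial σ R) :
    (MvPolynomial.aeval f p).natDegree ≤ p.totalDegree := by
  rw [MvPolynomial.aeval_def, MvPolynomial.eval₂_eq]
  refine natDegree_sum_le_of_forall_le _ _ fun d hd => ?_
  calc (algebraMap R R[X] (p.coeff d) * ∏ j ∈ d.support, f j ^ d j).natDegree
      ≤ ∑ j ∈ d.support, (f j ^ d j).natDegree :=
        (natDegree_C_mul_le _ _).trans (natDegree_prod_le _ _)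
    _ ≤ ∑ j ∈ d.support, d j :=
        sum_le_sum fun j _ => natDegree_pow_le_of_le _ (hf j) |>.trans_eq (mul_one _)
    _ ≤ p.totalDegree := MvPolynomial.le_totalDegree hd

theorem Polynomial.natDegree_le_iff_coeff_eq_zero_of_natDegree_le {R : Type*} [Semiring R]
    {f : R[X]} {m : ℕ} (hf : f.natDegree ≤ m) (a : ℕ) :
    f.natDegree ≤ a ↔ ∀ k < m - a, f.coeff (a + 1 + k) = 0 := by
  rw [natDegree_le_iff_coeff_eq_zero]
  refine ⟨fun h k _ => h _ (by omega), fun h N haN => ?_⟩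
  rcases lt_or_ge m N with hmN | hNm
  · exact coeff_eq_zero_of_natDegree_lt (hf.trans_lt hmN)
  · simpa [show a + 1 + (N - a - 1) = N by omega] using h (N - a - 1) (by omega)

theorem Submodule.eq_top_of_forall_single_mem {R ι : Type*} [Semiring R] [Finite ι]
    [DecidableEq ι] {S : Submodule R (ι → R)} (h : ∀ x, Pi.single x 1 ∈ S) : S = ⊤ := by
  rw [eq_top_iff, ← (Pi.basisFun R ι).span_eq, Submodule.span_le]
  rintro _ ⟨x, rfl⟩
  simpa using h x

theorem Submodule.finrank_inf_ker_add_finrank {K V U : Type*} [DivisionRing K] [AddCommGroup V]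
    [Module K V] [AddCommGroup U] [Module K U] (W : Submodule K V) [FiniteDimensional K W]
    (f : V →ₗ[K] U) (hf : W.map f = ⊤) :
    Module.finrank K ↥(W ⊓ LinearMap.ker f) + Module.finrank K U = Module.finrank K W := by
  have := (f.domRestrict W).finrank_range_add_finrank_ker
  rw [LinearMap.range_domRestrict, hf, finrank_top, LinearMap.ker_domRestrict] at this
  rw [← Submodule.map_comap_subtype, Submodule.finrank_map_subtype_eq]
  omega

theorem Finset.card_filter_fst_add_snd_le (m : ℕ) :
    #((range (m + 1) ×ˢ range (m + 1)).filter fun p => p.1 + p.2 ≤ m) =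
      (m + 1) * (m + 2) / 2 := by
  rw [card_eq_sum_card_fiberwise (f := fun p => p.1 + p.2) (t := range (m + 1))
    fun p hp => by
      simp only [coe_filter, coe_range, Set.mem_ofPred_eq, Set.mem_Iio] at hp ⊢
      omega]
  have hfiber : ∀ d ∈ range (m + 1),
      #(((range (m + 1) ×ˢ range (m + 1)).filter fun p => p.1 + p.2 ≤ m).filter
        fun p => p.1 + p.2 = d) = d + 1 := by
    intro d hd
    rw [← Finset.Nat.card_antidiagonal d]
    congr 1
    ext p
    rw [mem_range] at hd
    simp only [mem_filter, mem_product, mem_range, HasAntidiagonal.mem_antidiagonal]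
    omega
  rw [sum_congr rfl hfiber]
  have := sum_range_id_mul_two (m + 2)
  rw [sum_range_succ', add_zero, show m + 2 - 1 = m + 1 from rfl, mul_comm (m + 2)] at this
  omega

theorem MvPolynomial.finrank_restrictTotalDegree_fin_two (R : Type*) [CommRing R] [Nontrivial R]
    (m : ℕ) : Module.finrank R (restrictTotalDegree (Fin 2) R m) = (m + 1) * (m + 2) / 2 := by
  rw [restrictTotalDegree, Module.finrank_eq_nat_card_basis (basisRestrictSupport R _),
    ← Finset.card_filter_fst_add_snd_le, ← Nat.card_eq_finsetCard]
  refine Nat.card_congr <|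
    (Finsupp.equivFunOnFinite.trans (finTwoArrowEquiv ℕ)).subtypeEquiv fun n => ?_
  simp [Finsupp.sum_fintype]
  omega

theorem Fin.eq_add_one_or_eq_add_two_of_ne {i j : Fin 3} (h : j ≠ i) :
    j = i + 1 ∨ j = i + 2 := by
  revert i j
  decide

namespace ReferenceTriangle

noncomputable section

def vertex : Fin 3 → Fin 2 → ℝ := ![![-1, 0], ![1, 0], ![0, √3]]

def edge (i : Fin 3) : MvPolynomial (Fin 2) ℝ →ₐ[ℝ] ℝ[X] :=
  MvPolynomial.aeval fun j => C (vertex (i + 1) j) + C (vertex (i + 2) j - vertex (i + 1) j) * X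

/-- The barycentric coordinate of `vertex k`; it vanishes on `edge k`, the edge opposite
`vertex k`. -/
def baryCoord : Fin 3 → MvPolynomial (Fin 2) ℝ :=
  ![MvPolynomial.C 2⁻¹ * (1 - MvPolynomial.X 0)
      - MvPolynomial.C (2 * √3)⁻¹ * MvPolynomial.X 1,
    MvPolynomial.C 2⁻¹ * (1 + MvPolynomial.X 0)
      - MvPolynomial.C (2 * √3)⁻¹ * MvPolynomial.X 1,
    MvPolynomial.C (√3)⁻¹ * MvPolynomial.X 1]

theorem edge_baryCoord_self (i : Fin 3) : edge i (baryCoord i) = 0 := by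
  have : √3 ≠ 0 := by positivity
  fin_cases i <;> refine Polynomial.funext fun t => ?_ <;>
    simp [edge, baryCoord, vertex] <;> field_simp <;> ring

theorem edge_baryCoord_add_one (i : Fin 3) : edge i (baryCoord (i + 1)) = 1 - X := by
  have : √3 ≠ 0 := by positivity
  fin_cases i <;> refine Polynomial.funext fun t => ?_ <;>
    simp [edge, baryCoord, vertex] <;> field_simp <;> ring

theorem edge_baryCoord_add_two (i : Fin 3) : edge i (baryCoord (i + 2)) = X := by
  have : √3 ≠ 0 := by positivity
  fin_cases i <;> refine Polynomial.funext fun t => ?_ <;>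
    simp [edge, baryCoord, vertex] <;> field_simp <;> ring

theorem totalDegree_baryCoord_le (k : Fin 3) : (baryCoord k).totalDegree ≤ 1 := by
  have hX (j : Fin 2) : MvPolynomial.X j ∈ MvPolynomial.restrictTotalDegree (Fin 2) ℝ 1 := by
    simp [MvPolynomial.mem_restrictTotalDegree, MvPolynomial.totalDegree_X]
  have h1 : (1 : MvPolynomial (Fin 2) ℝ) ∈ MvPolynomial.restrictTotalDegree (Fin 2) ℝ 1 := by
    simp [MvPolynomial.mem_restrictTotalDegree]
  rw [← MvPolynomial.mem_restrictTotalDegree]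
  fin_cases k <;> simp only [baryCoord, MvPolynomial.C_mul'] <;>
    apply_rules [Submodule.sub_mem, Submodule.add_mem, Submodule.smul_mem]

theorem natDegree_edge_le (i : Fin 3) (p : MvPolynomial (Fin 2) ℝ) :
    (edge i p).natDegree ≤ p.totalDegree :=
  MvPolynomial.natDegree_aeval_le_totalDegree
    (fun _ => by rw [add_comm]; exact natDegree_linear_le) p

def sideShape (i : Fin 3) (a k : ℕ) : MvPolynomial (Fin 2) ℝ :=
  -(baryCoord (i + 1) * baryCoord (i + 2) ^ a * ∑ j ∈ range (k + 1), baryCoord (i + 2) ^ j)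

theorem edge_sideShape_self (i : Fin 3) (a k : ℕ) :
    edge i (sideShape i a k) = X ^ (a + 1 + k) - X ^ a := by
  simp only [sideShape, map_neg, map_mul, map_pow, map_sum, edge_baryCoord_add_one,
    edge_baryCoord_add_two]
  linear_combination X ^ a * geom_sum_mul (X : ℝ[X]) (k + 1)

theorem edge_sideShape_of_ne {i j : Fin 3} (hji : j ≠ i) {a : ℕ} (ha : a ≠ 0) (k : ℕ) :
    edge j (sideShape i a k) = 0 := by
  simp only [sideShape, map_neg, map_mul, map_pow]
  rcases Fin.eq_add_one_or_eq_add_two_of_ne hji with rfl | rfl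
  · simp [edge_baryCoord_self]
  · simp [edge_baryCoord_self, ha]

theorem totalDegree_sideShape_le (i : Fin 3) (a k : ℕ) :
    (sideShape i a k).totalDegree ≤ a + 1 + k := by
  have hpow (n : ℕ) : (baryCoord (i + 2) ^ n).totalDegree ≤ n :=
    (MvPolynomial.totalDegree_pow _ n).trans
      (Nat.mul_le_mul_left n (totalDegree_baryCoord_le _) |>.trans_eq (mul_one n))
  have hsum : (∑ j ∈ range (k + 1), baryCoord (i + 2) ^ j).totalDegree ≤ k :=
    MvPolynomial.totalDegree_finsetSum_le fun j hj =>
      (hpow j).trans (Nat.lt_succ_iff.mp (mem_range.mp hj))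
  rw [sideShape, MvPolynomial.totalDegree_neg]
  refine (MvPolynomial.totalDegree_mul _ _).trans ?_
  have := (MvPolynomial.totalDegree_mul (baryCoord (i + 1)) (baryCoord (i + 2) ^ a)).trans
    (add_le_add (totalDegree_baryCoord_le _) (hpow a))
  omega

def edgeCoeffs (m : ℕ) (mi : Fin 3 → ℕ) :
    MvPolynomial (Fin 2) ℝ →ₗ[ℝ] (Σ i, Fin (m - mi i)) → ℝ :=
  LinearMap.pi fun x => lcoeff ℝ (mi x.1 + 1 + x.2) ∘ₗ (edge x.1).toLinearMap

theorem edgeCoeffs_eq_zero_iff {m : ℕ} {mi : Fin 3 → ℕ} {p : MvPolynomial (Fin 2) ℝ}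
    (hp : p.totalDegree ≤ m) :
    edgeCoeffs m mi p = 0 ↔ ∀ i, (edge i p).natDegree ≤ mi i := by
  simp only [funext_iff, Sigma.forall, edgeCoeffs, LinearMap.pi_apply, LinearMap.comp_apply,
    AlgHom.toLinearMap_apply, lcoeff_apply, Pi.zero_apply]
  refine forall_congr' fun i => ?_
  rw [natDegree_le_iff_coeff_eq_zero_of_natDegree_le ((natDegree_edge_le i p).trans hp),
    Fin.forall_iff]

theorem edgeCoeffs_sideShape {m : ℕ} {mi : Fin 3 → ℕ} {i : Fin 3} (hi : mi i ≠ 0)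
    (k : Fin (m - mi i)) : edgeCoeffs m mi (sideShape i (mi i) k) = Pi.single ⟨i, k⟩ 1 := by
  ext ⟨j, k'⟩
  by_cases hji : j = i
  · subst hji
    have hlow : mi j + 1 + (k' : ℕ) ≠ mi j := by omega
    simp [edgeCoeffs, edge_sideShape_self, Pi.single_apply, coeff_X_pow, Fin.ext_iff, hlow]
  · simp [edgeCoeffs, edge_sideShape_of_ne hji hi, hji]

theorem map_edgeCoeffs_restrictTotalDegree {m : ℕ} {mi : Fin 3 → ℕ}
    (hmi : ∀ i, mi i ≠ 0) :
    (MvPolynomial.restrictTotalDegree (Fin 2) ℝ m).map (edgeCoeffs m mi) = ⊤ :=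
  Submodule.eq_top_of_forall_single_mem fun ⟨i, k⟩ =>
    ⟨sideShape i (mi i) k, (MvPolynomial.mem_restrictTotalDegree _ _ _).2
      ((totalDegree_sideShape_le _ _ _).trans (by omega)), edgeCoeffs_sideShape (hmi i) k⟩

end

end ReferenceTriangle

theorem Nat.add_one_mul_add_two_div_two {m : ℕ} (hm : 1 ≤ m) :
    (m + 1) * (m + 2) / 2 = 3 * m + (m - 1) * (m - 2) / 2 := by
  obtain ⟨n, rfl⟩ := Nat.exists_eq_add_of_le' hm
  have : (n + 1 + 1) * (n + 1 + 2) = (n + 1 - 1) * (n + 1 - 2) + 2 * (3 * (n + 1)) := by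
    rcases n with _ | n
    · rfl
    · simp only [Nat.add_sub_cancel, show n + 1 + 1 - 2 = n by omega]
      ring
  omega

/-- Dimension of the constrained local polynomial space `P̂` (Section 4 of the paper):
polynomials of total degree at most `m` on the reference triangle whose restriction to
the `i`-th edge (affinely parametrized) has degree at most `m_i`. Its dimension is
`(m+1)(m+2)/2 − ((m−m₁)+(m−m₂)+(m−m₃))
  = 3 + (m₁−1)+(m₂−1)+(m₃−1) + (m−1)(m−2)/2`. -/
theorem stmt_10 (m m1 m2 m3 : ℕ)
    (h1 : 1 ≤ m1) (h2 : 1 ≤ m2) (h3 : 1 ≤ m3)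
    (hm1 : m1 ≤ m) (hm2 : m2 ≤ m) (hm3 : m3 ≤ m)
    (zhat : Fin 3 → Fin 2 → ℝ)
    (hz : zhat = ![![-1, 0], ![1, 0], ![0, Real.sqrt 3]])
    (mi : Fin 3 → ℕ) (hmi : mi = ![m1, m2, m3])
    -- `edge i` maps a bivariate polynomial `p` to the univariate polynomial
    -- `t ↦ p(γ_i(t))`, where `γ_i(t) = (1−t)·ẑ_{i+1} + t·ẑ_{i+2}` (indices mod 3).
    (edge : Fin 3 → (MvPolynomial (Fin 2) ℝ →ₐ[ℝ] Polynomial ℝ))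
    (hedge : ∀ i, edge i = MvPolynomial.aeval
      (fun j => Polynomial.C (zhat (i + 1) j)
        + Polynomial.C (zhat (i + 2) j - zhat (i + 1) j) * Polynomial.X))
    (Phat : Submodule ℝ (MvPolynomial (Fin 2) ℝ))
    (hPhat : ∀ p, p ∈ Phat ↔ p.totalDegree ≤ m ∧ ∀ i, (edge i p).natDegree ≤ mi i) :
    Module.finrank ℝ Phat = (m + 1) * (m + 2) / 2 - ((m - m1) + (m - m2) + (m - m3)) ∧
    Module.finrank ℝ Phat
      = 3 + ((m1 - 1) + (m2 - 1) + (m3 - 1)) + (m - 1) * (m - 2) / 2 := by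
  subst hz hmi
  obtain rfl : edge = ReferenceTriangle.edge := funext hedge
  have hmi_ne : ∀ i, ![m1, m2, m3] i ≠ 0 := by
    intro i
    fin_cases i <;> simp <;> omega
  have hPhat_eq : Phat = MvPolynomial.restrictTotalDegree (Fin 2) ℝ m ⊓
      LinearMap.ker (ReferenceTriangle.edgeCoeffs m ![m1, m2, m3]) := by
    ext p
    rw [hPhat, Submodule.mem_inf, MvPolynomial.mem_restrictTotalDegree, LinearMap.mem_ker]
    exact and_congr_right fun hp => (ReferenceTriangle.edgeCoeffs_eq_zero_iff hp).symm
  have hdim := Submodule.finrank_inf_ker_add_finrank _ _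
    (ReferenceTriangle.map_edgeCoeffs_restrictTotalDegree (m := m) hmi_ne)
  rw [← hPhat_eq, MvPolynomial.finrank_restrictTotalDegree_fin_two,
    Module.finrank_fintype_fun_eq_card, Fintype.card_sigma] at hdim
  simp only [Fintype.card_fin, Fin.sum_univ_three, Matrix.cons_val_zero, Matrix.cons_val_one,
    Matrix.cons_val_two, Matrix.head_cons, Matrix.tail_cons] at hdim
  have := Nat.add_one_mul_add_two_div_two (h1.trans hm1)
  omega
end
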